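/- arXiv:2603.08000 — 3 statements merged into one kernel-verified Lean document; each statement's English description precedes it below -/
import Mathlib

section
/- Let μ₁, μ₂ ∈ ℝ and 0 < σ₁ ≤ σ₂. Then the Gaussian density ratio R has no strict global maximizer: there is no point l₀ such that R(l) < R(l₀) for all l ≠ l₀. Combined with the existence result for σ₁ > σ₂, R has a unique strict global maximum if and only if σ₁² > σ₂². -/
/-- The Gaussian probability density with mean `μ` and standard deviation `σ`. -/
noncomputable def gaussianPDF (μ σ x : ℝ) : ℝ :=
  (1 / (σ * Real.sqrt (2 * Real.pi))) * Real.exp (-(x - μ) ^ 2 / (2 * σ ^ 2))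

/-!
Up to the positive factor `σ₁ / σ₂`, the density ratio is `exp` of the log-ratio exponent, which
is a quadratic polynomial in `l` with leading coefficient `1 / (2σ₁²) - 1 / (2σ₂²)`. Since `exp`
is strictly increasing, `R` has a strict global maximum exactly when this quadratic does, i.e.
exactly when the leading coefficient is negative, i.e. when `σ₂² < σ₁²`. A strict global
maximizer is automatically unique.
-/

open Real

def IsStrictMax {α β : Type*} [Preorder β] (f : α → β) (x : α) : Prop :=
  ∀ y, y ≠ x → f y < f x

theorem IsStrictMax.eq {α β : Type*} [Preorder β] {f : α → β} {x y : α}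
    (hx : IsStrictMax f x) (hy : IsStrictMax f y) : x = y := by
  by_contra hne
  exact lt_asymm (hx y (Ne.symm hne)) (hy x hne)

theorem existsUnique_isStrictMax_iff {α β : Type*} [Preorder β] {f : α → β} :
    (∃! x, IsStrictMax f x) ↔ ∃ x, IsStrictMax f x :=
  ⟨ExistsUnique.exists, fun ⟨x, hx⟩ => ⟨x, hx, fun _ hy => hy.eq hx⟩⟩

theorem StrictMono.isStrictMax_comp_iff {α β γ : Type*} [LinearOrder β] [Preorder γ]
    {g : β → γ} (hg : StrictMono g) {f : α → β} {x : α} :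
    IsStrictMax (g ∘ f) x ↔ IsStrictMax f x := by
  simp only [IsStrictMax, Function.comp_apply, hg.lt_iff_lt]

theorem exists_isStrictMax_quadratic_iff (a b c : ℝ) :
    (∃ x, IsStrictMax (fun x => a * x ^ 2 + b * x + c) x) ↔ a < 0 := by
  constructor
  · rintro ⟨x, hx⟩
    by_contra! ha
    have hright := hx (x + 1) (by simp)
    have hleft := hx (x - 1) (by simp)
    -- the second difference at `x` is `2a ≥ 0`
    nlinarith
  · intro ha
    refine ⟨-b / (2 * a), fun y hy => ?_⟩
    have hvertex : (a * (-b / (2 * a)) ^ 2 + b * (-b / (2 * a)) + c) - (a * y ^ 2 + b * y + c)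
        = -a * (y + b / (2 * a)) ^ 2 := by
      field_simp [ha.ne]
      ring
    have hsq : 0 < (y + b / (2 * a)) ^ 2 := by
      have : y + b / (2 * a) ≠ 0 := by
        intro h
        exact hy (by rw [neg_div]; linarith)
      positivity
    nlinarith

noncomputable def gaussianLogRatio (μ₁ μ₂ σ₁ σ₂ l : ℝ) : ℝ :=
  (l - μ₁) ^ 2 / (2 * σ₁ ^ 2) - (l - μ₂) ^ 2 / (2 * σ₂ ^ 2)

theorem gaussianPDF_div_gaussianPDF {μ₁ μ₂ σ₁ σ₂ : ℝ} (hσ₁ : σ₁ ≠ 0) (hσ₂ : σ₂ ≠ 0) (l : ℝ) :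
    gaussianPDF μ₂ σ₂ l / gaussianPDF μ₁ σ₁ l
      = σ₁ / σ₂ * exp (gaussianLogRatio μ₁ μ₂ σ₁ σ₂ l) := by
  have hsqrt : sqrt (2 * π) ≠ 0 := (sqrt_pos.mpr (by positivity)).ne'
  rw [gaussianPDF, gaussianPDF, mul_div_mul_comm, ← exp_sub, gaussianLogRatio]
  congr 1
  · field_simp
  · congr 1
    ring

theorem gaussianLogRatio_eq_quadratic (μ₁ μ₂ σ₁ σ₂ l : ℝ) :
    gaussianLogRatio μ₁ μ₂ σ₁ σ₂ l
      = (1 / (2 * σ₁ ^ 2) - 1 / (2 * σ₂ ^ 2)) * l ^ 2 + (μ₂ / σ₂ ^ 2 - μ₁ / σ₁ ^ 2) * l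
        + (μ₁ ^ 2 / (2 * σ₁ ^ 2) - μ₂ ^ 2 / (2 * σ₂ ^ 2)) := by
  rw [gaussianLogRatio]
  ring

/-- If `0 < σ₁ ≤ σ₂`, the density ratio `R(l) = φ_{μ₂,σ₂}(l)/φ_{μ₁,σ₁}(l)` has no strict
global maximizer; combined with the existence result for `σ₁ > σ₂`, `R` has a unique
strict global maximum iff `σ₁² > σ₂²`. -/
theorem stmt_1 (μ₁ μ₂ σ₁ σ₂ : ℝ) (hσ₁ : 0 < σ₁) (hσ₂ : 0 < σ₂)
    (R : ℝ → ℝ) (hR : ∀ l, R l = gaussianPDF μ₂ σ₂ l / gaussianPDF μ₁ σ₁ l) :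
    (σ₁ ≤ σ₂ → ¬ ∃ l₀ : ℝ, ∀ l : ℝ, l ≠ l₀ → R l < R l₀) ∧
    ((∃! l₀ : ℝ, ∀ l : ℝ, l ≠ l₀ → R l < R l₀) ↔ σ₂ ^ 2 < σ₁ ^ 2) := by
  have hR_comp : R = (fun t => σ₁ / σ₂ * exp t) ∘ fun l =>
      (1 / (2 * σ₁ ^ 2) - 1 / (2 * σ₂ ^ 2)) * l ^ 2 + (μ₂ / σ₂ ^ 2 - μ₁ / σ₁ ^ 2) * l
        + (μ₁ ^ 2 / (2 * σ₁ ^ 2) - μ₂ ^ 2 / (2 * σ₂ ^ 2)) := by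
    ext l
    rw [hR, gaussianPDF_div_gaussianPDF hσ₁.ne' hσ₂.ne', gaussianLogRatio_eq_quadratic,
      Function.comp_apply]
  have hcoeff : 1 / (2 * σ₁ ^ 2) - 1 / (2 * σ₂ ^ 2) < 0 ↔ σ₂ ^ 2 < σ₁ ^ 2 := by
    rw [sub_neg, one_div_lt_one_div (by positivity) (by positivity)]
    constructor <;> intro h <;> linarith
  have hexists : (∃ l₀, IsStrictMax R l₀) ↔ σ₂ ^ 2 < σ₁ ^ 2 := by
    rw [hR_comp, ← hcoeff, ← exists_isStrictMax_quadratic_iff]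
    exact exists_congr fun _ => (exp_strictMono.const_mul (div_pos hσ₁ hσ₂)).isStrictMax_comp_iff
  refine ⟨fun hle hmax => ?_, existsUnique_isStrictMax_iff.trans hexists⟩
  exact (pow_le_pow_left₀ hσ₁.le hle 2).not_gt (hexists.mp hmax)
end

section
/- Consider a GRPO group with at least one correct trajectory, and let λ > 0. Then the following are equivalent: (i) for every correct trajectory i (a_i = 1), 1 + λ·s_i ≥ (1/G)·Σ_j (a_j + λ·s_j); (ii) λ·(M − m) ≤ p^err, where M is the mean length reward, m the minimum length reward over correct trajectories, and p^err the fraction of incorrect trajectories. In particular, when M > m the constraint (i) holds for λ > 0 exactly when λ ≤ p^err/(M − m). -/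
/-!
The mean total reward of the group is `1 - p^err + λ M`, since the accuracy rewards sum to the
number of correct trajectories. The constraint `mean ≤ 1 + λ s_i` is monotone in `s_i`, so it
holds for every correct trajectory iff it holds at the minimum `m`, which rearranges to
`λ (M - m) ≤ p^err`.
-/

open Finset

lemma IsLeast.forall_le_comp_iff {α β : Type*} [Preorder α] [Preorder β] {S : Set α} {m : α}
    (hm : IsLeast S m) {f : α → β} (hf : Monotone f) {c : β} :
    (∀ x ∈ S, c ≤ f x) ↔ c ≤ f m :=
  ⟨fun h => h m hm.1, fun h _ hx => h.trans (hf (hm.2 hx))⟩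

lemma sum_eq_card_sub_card_filter_eq_zero {ι : Type*} [Fintype ι] (a : ι → ℝ)
    (ha : ∀ i, a i = 0 ∨ a i = 1) :
    ∑ i, a i = Fintype.card ι - #{i | a i = 0} := by
  have hindicator : ∀ i, a i = if a i = 0 then 0 else 1 := fun i => by
    rcases ha i with h | h <;> simp [h]
  rw [sum_congr rfl fun i _ => hindicator i, sum_ite, sum_const_zero, zero_add, sum_const,
    nsmul_one, eq_sub_iff_add_eq, ← Nat.cast_add, add_comm, card_filter_add_card_filter_not,
    card_univ]

lemma mean_add_mul_eq {ι : Type*} [Fintype ι] [Nonempty ι] (a s : ι → ℝ)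
    (ha : ∀ i, a i = 0 ∨ a i = 1) (lam : ℝ) :
    (∑ j, (a j + lam * s j)) / Fintype.card ι =
      1 - #{i | a i = 0} / Fintype.card ι + lam * ((∑ i, s i) / Fintype.card ι) := by
  have hcard : (Fintype.card ι : ℝ) ≠ 0 := by positivity
  rw [sum_add_distrib, ← mul_sum, sum_eq_card_sub_card_filter_eq_zero a ha]
  field_simp

theorem stmt_11_general (G : ℕ) (hG : 0 < G) (a s : Fin G → ℝ)
    (ha : ∀ i, a i = 0 ∨ a i = 1)
    (lam : ℝ) (hlam : 0 < lam)
    (perr : ℝ)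
    (hperr : perr = ((Finset.univ.filter fun i => a i = 0).card : ℝ) / G)
    (M : ℝ) (hM : M = (∑ i, s i) / G)
    (m : ℝ) (hm : IsLeast {x : ℝ | ∃ i, a i = 1 ∧ s i = x} m) :
    ((∀ i, a i = 1 → (∑ j, (a j + lam * s j)) / G ≤ 1 + lam * s i) ↔
      lam * (M - m) ≤ perr) ∧
    (m < M →
      ((∀ i, a i = 1 → (∑ j, (a j + lam * s j)) / G ≤ 1 + lam * s i) ↔
        lam ≤ perr / (M - m))) := by
  have : Nonempty (Fin G) := ⟨⟨0, hG⟩⟩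
  have hmean : (∑ j, (a j + lam * s j)) / G = 1 - perr + lam * M := by
    simpa [hperr, hM] using mean_add_mul_eq a s ha lam
  have hkey : (∀ i, a i = 1 → (∑ j, (a j + lam * s j)) / G ≤ 1 + lam * s i) ↔
      lam * (M - m) ≤ perr := by
    have hmono : Monotone fun x : ℝ => 1 + lam * x := fun x y hxy => by
      dsimp only
      gcongr
    calc (∀ i, a i = 1 → (∑ j, (a j + lam * s j)) / G ≤ 1 + lam * s i)
        ↔ ∀ x ∈ {x : ℝ | ∃ i, a i = 1 ∧ s i = x}, 1 - perr + lam * M ≤ 1 + lam * x := by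
          simp [hmean]
      _ ↔ 1 - perr + lam * M ≤ 1 + lam * m := hm.forall_le_comp_iff hmono
      _ ↔ lam * (M - m) ≤ perr := by constructor <;> intro h <;> linarith
  refine ⟨hkey, fun hmM => ?_⟩
  rw [hkey, le_div_iff₀ (sub_pos.mpr hmM)]

/-- In a GRPO group with at least one correct trajectory and coefficient `λ > 0`, the
constraint "every correct trajectory's total reward `1 + λ·s_i` is at least the group
mean total reward" is equivalent to `λ·(M − m) ≤ p^err`, where `M` is the mean length
reward, `m` the minimum length reward over correct trajectories, and `p^err` the
fraction of incorrect trajectories; in particular when `M > m` this holds for `λ > 0`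
exactly when `λ ≤ p^err/(M − m)`. -/
theorem stmt_11 (G : ℕ) (hG : 0 < G) (a s : Fin G → ℝ)
    (ha : ∀ i, a i = 0 ∨ a i = 1)
    (hs : ∀ i, s i ≤ 0) (hs0 : ∀ i, a i = 0 → s i = 0)
    (hcorrect : ∃ i, a i = 1)
    (lam : ℝ) (hlam : 0 < lam)
    (perr : ℝ)
    (hperr : perr = ((Finset.univ.filter fun i => a i = 0).card : ℝ) / G)
    (M : ℝ) (hM : M = (∑ i, s i) / G)
    (m : ℝ) (hm : IsLeast {x : ℝ | ∃ i, a i = 1 ∧ s i = x} m) :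
    ((∀ i, a i = 1 → (∑ j, (a j + lam * s j)) / G ≤ 1 + lam * s i) ↔
      lam * (M - m) ≤ perr) ∧
    (m < M →
      ((∀ i, a i = 1 → (∑ j, (a j + lam * s j)) / G ≤ 1 + lam * s i) ↔
        lam ≤ perr / (M - m))) :=
  stmt_11_general G hG a s ha lam hlam perr hperr M hM m hm
end

section
/- Consider a GRPO group containing at least one correct and at least one incorrect trajectory, and suppose some correct trajectory has strictly negative length reward (so m < 0, and since M ≥ (1 − p^err)·m and p^err > 0, M > m). Define the dynamic coefficient Λ = p^err/(M − m) > 0 and total rewards r_i = a_i + Λ·s_i. Then every correct trajectory has reward at least the group mean (r_i ≥ (1/G)·Σ_j r_j whenever a_i = 1) and every incorrect trajectory has reward at most the group mean (r_i ≤ (1/G)·Σ_j r_j whenever a_i = 0); hence the mean-centered (normalized) advantage of every correct trajectory is nonnegative and that of every incorrect trajectory is nonpositive. -/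
/-!
Write `A = ∑ aᵢ` and `S = ∑ sᵢ`, so that `G · p^err = G - A`. Since `sᵢ ≥ m · aᵢ` for every `i`,
`S - G m ≥ -m (G - A) > 0`, so `Λ` is positive, and `Λ (S - G m) = G - A` turns the group mean
`(A + Λ S) / G` into `1 + Λ m`. A correct trajectory has reward `1 + Λ sᵢ ≥ 1 + Λ m`, while an
incorrect one has reward `0`, and `0 ≤ 1 + Λ m` is again the bound `Λ m A ≤ Λ S`.
-/

open Finset

section BinaryRewards

variable {ι : Type*} [Fintype ι] {a s : ι → ℝ}

theorem card_filter_eq_zero_eq_card_sub_sum (ha : ∀ i, a i = 0 ∨ a i = 1) :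
    ((univ.filter fun i => a i = 0).card : ℝ) = Fintype.card ι - ∑ i, a i := by
  rw [← sum_boole, ← card_univ, ← nsmul_one, ← sum_const, ← sum_sub_distrib]
  refine sum_congr rfl fun i _ => ?_
  rcases ha i with h | h <;> simp [h]

theorem mul_sum_le_sum_of_le_of_eq_zero {m : ℝ} (ha : ∀ i, a i = 0 ∨ a i = 1)
    (hs0 : ∀ i, a i = 0 → s i = 0) (hm : ∀ i, a i = 1 → m ≤ s i) :
    m * ∑ i, a i ≤ ∑ i, s i := by
  rw [mul_sum]
  refine sum_le_sum fun i _ => ?_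
  rcases ha i with h | h
  · simp [h, hs0 i h]
  · simpa [h] using hm i h

end BinaryRewards

section MeanReward

variable {G A S m Λ : ℝ}

theorem div_sub_pos_of_mul_le (hG : 0 < G) (hA : A < G) (hm : m < 0) (hS : m * A ≤ S) :
    0 < S / G - m := by
  rw [sub_pos, lt_div_iff₀ hG]
  nlinarith

theorem mean_eq_one_add_mul (hG : G ≠ 0) (hΛ : Λ * (S / G - m) = (G - A) / G) :
    (A + Λ * S) / G = 1 + Λ * m := by
  field_simp at hΛ ⊢
  linarith

theorem one_add_mul_nonneg (hG : 0 < G) (hA : A < G) (hS : m * A ≤ S) (hΛ₀ : 0 ≤ Λ)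
    (hΛ : Λ * (S / G - m) = (G - A) / G) : 0 ≤ 1 + Λ * m := by
  have key : Λ * (S - G * m) = G - A := by
    field_simp at hΛ
    linarith
  nlinarith [mul_le_mul_of_nonneg_left hS hΛ₀]

end MeanReward

theorem stmt_14_general (G : ℕ) (hG : 0 < G) (a s : Fin G → ℝ)
    (ha : ∀ i, a i = 0 ∨ a i = 1)
    (hs0 : ∀ i, a i = 0 → s i = 0)
    (hincorrect : ∃ i, a i = 0)
    (hneg : ∃ i, a i = 1 ∧ s i < 0)
    (perr : ℝ)
    (hperr : perr = ((Finset.univ.filter fun i => a i = 0).card : ℝ) / G)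
    (M : ℝ) (hM : M = (∑ i, s i) / G)
    (m : ℝ) (hm : IsLeast {x : ℝ | ∃ i, a i = 1 ∧ s i = x} m)
    (Lam : ℝ) (hLam : Lam = perr / (M - m))
    (r : Fin G → ℝ) (hr : ∀ i, r i = a i + Lam * s i) :
    0 < Lam ∧
    (∀ i, a i = 1 → (∑ j, r j) / G ≤ r i) ∧
    (∀ i, a i = 0 → r i ≤ (∑ j, r j) / G) := by
  have hGpos : (0 : ℝ) < G := Nat.cast_pos.mpr hG
  have hle : ∀ i, a i = 1 → m ≤ s i := fun i hi => hm.2 ⟨i, hi, rfl⟩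
  obtain ⟨i₀, hi₀, hsi₀⟩ := hneg
  have hcard := card_filter_eq_zero_eq_card_sub_sum ha
  rw [Fintype.card_fin] at hcard
  have hsum_lt : ∑ i, a i < G := by
    obtain ⟨i, hi⟩ := hincorrect
    have : (0 : ℝ) < (univ.filter fun i => a i = 0).card := by
      exact_mod_cast card_pos.mpr ⟨i, by simp [hi]⟩
    linarith
  have hS := mul_sum_le_sum_of_le_of_eq_zero ha hs0 hle
  have hMm : 0 < M - m := hM ▸ div_sub_pos_of_mul_le hGpos hsum_lt ((hle i₀ hi₀).trans_lt hsi₀) hS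
  have hperr_pos : 0 < perr := hperr ▸ hcard ▸ div_pos (sub_pos.mpr hsum_lt) hGpos
  have hΛ : Lam * ((∑ i, s i) / G - m) = (G - ∑ i, a i) / G := by
    rw [← hM, ← hcard, ← hperr, hLam, div_mul_cancel₀ _ hMm.ne']
  have hLam_pos : 0 < Lam := hLam ▸ div_pos hperr_pos hMm
  have hmean : (∑ j, r j) / G = 1 + Lam * m := by
    simp only [hr, sum_add_distrib, ← mul_sum]
    exact mean_eq_one_add_mul hGpos.ne' hΛ
  refine ⟨hLam_pos, fun i hi => ?_, fun i hi => ?_⟩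
  · rw [hmean, hr, hi]
    gcongr
    exact hle i hi
  · rw [hmean, hr, hi, hs0 i hi, mul_zero, add_zero]
    exact one_add_mul_nonneg hGpos hsum_lt hS hLam_pos.le hΛ

/-- In a GRPO group with at least one correct and at least one incorrect trajectory,
where some correct trajectory has strictly negative length reward, the dynamic
coefficient `Λ = p^err/(M − m)` is positive, and with total rewards
`r_i = a_i + Λ·s_i`, every correct trajectory's reward is at least the group mean
and every incorrect trajectory's reward is at most the group mean: the mean-centered
advantage of correct trajectories is nonnegative and that of incorrect trajectories
is nonpositive. -/
theorem stmt_14 (G : ℕ) (hG : 0 < G) (a s : Fin G → ℝ)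
    (ha : ∀ i, a i = 0 ∨ a i = 1)
    (hs : ∀ i, s i ≤ 0) (hs0 : ∀ i, a i = 0 → s i = 0)
    (hcorrect : ∃ i, a i = 1) (hincorrect : ∃ i, a i = 0)
    (hneg : ∃ i, a i = 1 ∧ s i < 0)
    (perr : ℝ)
    (hperr : perr = ((Finset.univ.filter fun i => a i = 0).card : ℝ) / G)
    (M : ℝ) (hM : M = (∑ i, s i) / G)
    (m : ℝ) (hm : IsLeast {x : ℝ | ∃ i, a i = 1 ∧ s i = x} m)
    (Lam : ℝ) (hLam : Lam = perr / (M - m))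
    (r : Fin G → ℝ) (hr : ∀ i, r i = a i + Lam * s i) :
    0 < Lam ∧
    (∀ i, a i = 1 → (∑ j, r j) / G ≤ r i) ∧
    (∀ i, a i = 0 → r i ≤ (∑ j, r j) / G) :=
  stmt_14_general G hG a s ha hs0 hincorrect hneg perr hperr M hM m hm Lam hLam r hr
end
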